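/- arXiv:1011.2989 — 3 statements merged into one kernel-verified Lean document; each statement's English description precedes it below -/
import Mathlib

section
/- Let A be an n×n real matrix, τ ∈ ℝ, let M : ℕ → ℝⁿ, z : ℕ → ℝ, ẑ : ℤ → ℝ (with ẑ(k) ≠ 0 for all k) and E : ℕ → ℝⁿ satisfy the recursion E(k+1) = exp(τA)·E(k) + (z(k)/ẑ(k−1) − 1)·M(k+1). Assume that the operator norm of exp(τA) is strictly less than 1 and that ẑ(k−1) = z(k) for every k ≥ k₀. Then for every n ≥ 0, ‖E(k₀+n)‖ ≤ ‖exp(τA)‖ⁿ · ‖E(k₀)‖, and consequently E(k₀+n) → 0 as n → ∞, regardless of the value of E(k₀). -/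
open Matrix Filter

namespace ContinuousLinearMap

variable {𝕜 V : Type*} [NontriviallyNormedField 𝕜] [SeminormedAddCommGroup V]
  [NormedSpace 𝕜 V]

theorem norm_orbit_le_opNorm_pow_mul (T : V →L[𝕜] V) {u : ℕ → V}
    (hu : ∀ m, u (m + 1) = T (u m)) (m : ℕ) : ‖u m‖ ≤ ‖T‖ ^ m * ‖u 0‖ :=
  le_geom (u := fun k => ‖u k‖) (norm_nonneg T) m fun k _ => hu k ▸ T.le_opNorm (u k)

theorem tendsto_orbit_zero_of_opNorm_lt_one (T : V →L[𝕜] V) (hT : ‖T‖ < 1) {u : ℕ → V}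
    (hu : ∀ m, u (m + 1) = T (u m)) : Tendsto u atTop (nhds 0) := by
  have hgeom : Tendsto (fun m : ℕ => ‖T‖ ^ m * ‖u 0‖) atTop (nhds 0) := by
    simpa using (tendsto_pow_atTop_nhds_zero_of_lt_one (norm_nonneg T) hT).mul_const ‖u 0‖
  exact squeeze_zero_norm (T.norm_orbit_le_opNorm_pow_mul hu) hgeom

end ContinuousLinearMap

/-- **Exponential error decay.**
If the operator norm (induced by the Euclidean norm) of `exp (τ A)` is `< 1` and the
detection is correct from time `k₀` onwards, then `‖E (k₀+n)‖ ≤ ‖exp (τ A)‖ⁿ ⬝ ‖E k₀‖`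
and `E (k₀+n) → 0`, regardless of the initial error `E k₀`. -/
theorem one_state_error_decay_to_zero
    {n : ℕ} (A : Matrix (Fin n) (Fin n) ℝ) (τ : ℝ)
    (M : ℕ → EuclideanSpace ℝ (Fin n)) (z : ℕ → ℝ) (zhat : ℤ → ℝ)
    (hzhat : ∀ k : ℤ, zhat k ≠ 0)
    (E : ℕ → EuclideanSpace ℝ (Fin n))
    (hE : ∀ k : ℕ,
      E (k + 1) = Matrix.toEuclideanCLM (𝕜 := ℝ) (NormedSpace.exp (τ • A)) (E k)
        + (z k / zhat ((k : ℤ) - 1) - 1) • M (k + 1))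
    (hnorm : ‖Matrix.toEuclideanCLM (𝕜 := ℝ) (NormedSpace.exp (τ • A))‖ < 1)
    (k₀ : ℕ)
    (hdet : ∀ k : ℕ, k₀ ≤ k → zhat ((k : ℤ) - 1) = z k) :
    (∀ m : ℕ, ‖E (k₀ + m)‖ ≤ ‖Matrix.toEuclideanCLM (𝕜 := ℝ) (NormedSpace.exp (τ • A))‖ ^ m * ‖E k₀‖)
      ∧ Tendsto (fun m : ℕ => E (k₀ + m)) atTop (nhds 0) := by
  set T := Matrix.toEuclideanCLM (𝕜 := ℝ) (NormedSpace.exp (τ • A))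
  -- Once detection is correct the fault term has coefficient `z k / z k - 1 = 0`.
  have hfree : ∀ m, E (k₀ + (m + 1)) = T (E (k₀ + m)) := fun m => by
    rw [← add_assoc, hE, ← hdet (k₀ + m) (Nat.le_add_right _ _), div_self (hzhat _), sub_self,
      zero_smul, add_zero]
  exact ⟨T.norm_orbit_le_opNorm_pow_mul (u := fun m => E (k₀ + m)) hfree,
    T.tendsto_orbit_zero_of_opNorm_lt_one hnorm (u := fun m => E (k₀ + m)) hfree⟩
end

section
/- Consider the one-state algorithm with constant nominal disturbance. Fix σ > 0, levels 0 < ζ₁ < ζ₀, an n×n real matrix A, τ ∈ ℝ, a row vector C ∈ ℝⁿ and vectors M_k ∈ ℝⁿ (k ≥ 1), and let (N_k)_{k≥1} be random variables on a probability space. Suppose the true disturbance is z_k = ζ₀ for all k, and define recursively: X₀ = X̂₀ = 0, Ẑ₋₁ = ζ₀; for k ≥ 1: X_k = exp(τA)·X_{k−1} + (ζ₀/Ẑ_{k−2})·M_k; R_k = C·X_k + N_k; S_k^w = C·exp(τA)·X̂_{k−1} + (w/Ẑ_{k−2})·C·M_k for w ∈ {ζ₀, ζ₁}; Ẑ_{k−1}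 = ζ₀ if |R_k − S_k^{ζ₀}| ≤ |R_k − S_k^{ζ₁}| and Ẑ_{k−1} = ζ₁ otherwise; X̂_k = exp(τA)·X̂_{k−1} + (Ẑ_{k−1}/Ẑ_{k−2})·M_k. Then for every n ≥ 1, the event { Ẑ_{k−1} = ζ₀ for all k = 1, …, n } is equal to the event ⋂_{k=1}^n { |N_k| ≤ |N_k + ((ζ₀−ζ₁)/ζ₀)·C·M_k| }; moreover, on this event X̂_k = X_k for all k = 0, …, n. -/
open Matrix

/-! While every past decision is correct, the estimated state coincides with the true one (the
two recursions then receive the same input `ζ₀ / Ẑ_{k-2}`), so the innovation `R_k - S_k^w`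
reduces to `N_k + ((ζ₀ - w) / ζ₀) C·M_k`. The decision rule compares its values at `w = ζ₀` and
`w = ζ₁`, so the next decision is correct exactly when `|N_k| ≤ |N_k + ((ζ₀ - ζ₁) / ζ₀) C·M_k|`;
induction on `n` gives the event identity. -/

theorem forall_one_le_le_iff_forall_lt {p : ℕ → Prop} {n : ℕ} :
    (∀ k, 1 ≤ k → k ≤ n → p k) ↔ ∀ j < n, p (j + 1) :=
  ⟨fun h j hj => h (j + 1) j.succ_pos hj, fun h k hk₁ hk₂ => by
    obtain ⟨j, rfl⟩ := Nat.exists_eq_add_of_le' hk₁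
    exact h j hk₂⟩

theorem ite_eq_left_iff_of_ne {p : Prop} [Decidable p] {α : Type*} {x y : α} (hne : y ≠ x) :
    (if p then x else y) = x ↔ p := by
  simp [ite_eq_left_iff, hne]

namespace OneState

variable {E : Type*} [AddCommGroup E] [Module ℝ E] (f : E → E) (c : E →ₗ[ℝ] ℝ)
  {ζ₀ ζ₁ : ℝ} {M : ℕ → E} {N R : ℕ → ℝ} {X Xh : ℕ → E} {Zh : ℤ → ℝ} {S : ℕ → ℝ → ℝ}

theorem estimate_eq_of_forall_correct (h0 : Xh 0 = X 0)
    (hX : ∀ k : ℕ, X (k + 1) = f (X k) + (ζ₀ / Zh ((k : ℤ) - 1)) • M (k + 1))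
    (hXh : ∀ k : ℕ, Xh (k + 1) = f (Xh k) + (Zh k / Zh ((k : ℤ) - 1)) • M (k + 1))
    {m : ℕ} (hcorrect : ∀ j < m, Zh j = ζ₀) : Xh m = X m := by
  induction m with
  | zero => exact h0
  | succ m ih =>
    rw [hX, hXh, ih fun j hj => hcorrect j (by omega), hcorrect m m.lt_succ_self]

theorem innovation_eq_of_estimate_eq
    (hX : ∀ k : ℕ, X (k + 1) = f (X k) + (ζ₀ / Zh ((k : ℤ) - 1)) • M (k + 1))
    (hR : ∀ k : ℕ, R (k + 1) = c (X (k + 1)) + N (k + 1))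
    (hS : ∀ (k : ℕ) (w : ℝ), S (k + 1) w = c (f (Xh k)) + (w / Zh ((k : ℤ) - 1)) * c (M (k + 1)))
    {m : ℕ} (hm : Xh m = X m) (w : ℝ) :
    R (m + 1) - S (m + 1) w = N (m + 1) + ((ζ₀ - w) / Zh ((m : ℤ) - 1)) * c (M (m + 1)) := by
  rw [hR, hS, hX, hm, map_add, map_smul, smul_eq_mul]
  ring

theorem previous_eq_of_forall_correct (hinit : Zh (-1) = ζ₀) {m : ℕ}
    (hcorrect : ∀ j < m, Zh j = ζ₀) : Zh ((m : ℤ) - 1) = ζ₀ := by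
  cases m with
  | zero => simpa using hinit
  | succ m => simpa using hcorrect m m.lt_succ_self

theorem forall_correct_iff (hne : ζ₁ ≠ ζ₀) (h0 : Xh 0 = X 0)
    (hinit : Zh (-1) = ζ₀)
    (hX : ∀ k : ℕ, X (k + 1) = f (X k) + (ζ₀ / Zh ((k : ℤ) - 1)) • M (k + 1))
    (hR : ∀ k : ℕ, R (k + 1) = c (X (k + 1)) + N (k + 1))
    (hS : ∀ (k : ℕ) (w : ℝ), S (k + 1) w = c (f (Xh k)) + (w / Zh ((k : ℤ) - 1)) * c (M (k + 1)))
    (hZ : ∀ k : ℕ, Zh k =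
      if |R (k + 1) - S (k + 1) ζ₀| ≤ |R (k + 1) - S (k + 1) ζ₁| then ζ₀ else ζ₁)
    (hXh : ∀ k : ℕ, Xh (k + 1) = f (Xh k) + (Zh k / Zh ((k : ℤ) - 1)) • M (k + 1)) (m : ℕ) :
    (∀ j < m, Zh j = ζ₀) ↔
      ∀ j < m, |N (j + 1)| ≤ |N (j + 1) + ((ζ₀ - ζ₁) / ζ₀) * c (M (j + 1))| := by
  induction m with
  | zero => simp
  | succ m ih =>
    rw [Nat.forall_lt_succ_right, Nat.forall_lt_succ_right, ← ih]
    refine and_congr_right fun hcorrect => ?_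
    have hm := estimate_eq_of_forall_correct f h0 hX hXh hcorrect
    have hprev := previous_eq_of_forall_correct hinit hcorrect
    have hinnov := innovation_eq_of_estimate_eq f c hX hR hS hm
    rw [hZ, hinnov, hinnov, hprev, sub_self, zero_div, zero_mul, add_zero,
      ite_eq_left_iff_of_ne hne]

end OneState

theorem one_state_correct_detection_event_general
    {Ω : Type*} {d : ℕ}
    (ζ₀ ζ₁ : ℝ) (hζ : ζ₁ < ζ₀)
    (A : Matrix (Fin d) (Fin d) ℝ) (τ : ℝ) (C : Fin d → ℝ) (M : ℕ → Fin d → ℝ)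
    (N : ℕ → Ω → ℝ)
    (X Xh : ℕ → Ω → Fin d → ℝ) (Zh : ℤ → Ω → ℝ) (R : ℕ → Ω → ℝ) (S : ℕ → ℝ → Ω → ℝ)
    (hX0 : ∀ ω, X 0 ω = 0) (hXh0 : ∀ ω, Xh 0 ω = 0) (hZinit : ∀ ω, Zh (-1) ω = ζ₀)
    (hX : ∀ (k : ℕ) (ω : Ω),
      X (k + 1) ω = NormedSpace.exp (τ • A) *ᵥ X k ω
        + (ζ₀ / Zh ((k : ℤ) - 1) ω) • M (k + 1))
    (hR : ∀ (k : ℕ) (ω : Ω), R (k + 1) ω = C ⬝ᵥ X (k + 1) ω + N (k + 1) ω)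
    (hS : ∀ (k : ℕ) (w : ℝ) (ω : Ω),
      S (k + 1) w ω = C ⬝ᵥ (NormedSpace.exp (τ • A) *ᵥ Xh k ω)
        + (w / Zh ((k : ℤ) - 1) ω) * (C ⬝ᵥ M (k + 1)))
    (hZ : ∀ (k : ℕ) (ω : Ω),
      Zh (k : ℤ) ω =
        if |R (k + 1) ω - S (k + 1) ζ₀ ω| ≤ |R (k + 1) ω - S (k + 1) ζ₁ ω| then ζ₀ else ζ₁)
    (hXh : ∀ (k : ℕ) (ω : Ω),
      Xh (k + 1) ω = NormedSpace.exp (τ • A) *ᵥ Xh k ω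
        + (Zh (k : ℤ) ω / Zh ((k : ℤ) - 1) ω) • M (k + 1))
    (n : ℕ) :
    ({ω : Ω | ∀ k : ℕ, 1 ≤ k → k ≤ n → Zh ((k : ℤ) - 1) ω = ζ₀}
        = ⋂ k ∈ Finset.Icc 1 n,
            {ω : Ω | |N k ω| ≤ |N k ω + ((ζ₀ - ζ₁) / ζ₀) * (C ⬝ᵥ M k)|})
      ∧ ∀ ω ∈ {ω : Ω | ∀ k : ℕ, 1 ≤ k → k ≤ n → Zh ((k : ℤ) - 1) ω = ζ₀},
          ∀ k ≤ n, Xh k ω = X k ω := by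
  set f := fun x => NormedSpace.exp (τ • A) *ᵥ x
  have h0 ω : Xh 0 ω = X 0 ω := by rw [hX0, hXh0]
  have hcorrect_iff ω :
      (∀ k : ℕ, 1 ≤ k → k ≤ n → Zh ((k : ℤ) - 1) ω = ζ₀) ↔ ∀ j < n, Zh j ω = ζ₀ := by
    simp [forall_one_le_le_iff_forall_lt]
  refine ⟨?_, fun ω hω k hk => ?_⟩
  · ext ω
    simp only [Set.mem_ofPred_eq, Set.mem_iInter, Finset.mem_Icc, and_imp, hcorrect_iff,
      forall_one_le_le_iff_forall_lt]
    exact OneState.forall_correct_iff (N := (N · ω)) (R := (R · ω)) (X := (X · ω))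
      (Xh := (Xh · ω)) (Zh := (Zh · ω)) (S := (S · · ω)) f (dotProductBilin ℝ ℝ C) hζ.ne (h0 ω)
      (hZinit ω) (hX · ω) (hR · ω) (hS · · ω) (hZ · ω) (hXh · ω) n
  · exact OneState.estimate_eq_of_forall_correct (X := (X · ω)) (Xh := (Xh · ω))
      (Zh := (Zh · ω)) f (h0 ω) (hX · ω) (hXh · ω)
      fun j hj => (hcorrect_iff ω).1 hω j (hj.trans_le hk)

/-- **One-state algorithm in the pre-failure regime: the event of all-correct detections.**
With constant nominal disturbance `z_k = ζ₀`, the event that the one-state algorithm decides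
`Ẑ_{k-1} = ζ₀` for all `k = 1, …, n` equals the event
`⋂_{k=1}^n { |N_k| ≤ |N_k + ((ζ₀-ζ₁)/ζ₀) C·M_k| }`, and on it `X̂_k = X_k` for `k ≤ n`. -/
theorem one_state_correct_detection_event
    {Ω : Type*} {d : ℕ}
    (σ : ℝ) (hσ : 0 < σ) (ζ₀ ζ₁ : ℝ) (hζ₁ : 0 < ζ₁) (hζ : ζ₁ < ζ₀)
    (A : Matrix (Fin d) (Fin d) ℝ) (τ : ℝ) (C : Fin d → ℝ) (M : ℕ → Fin d → ℝ)
    (N : ℕ → Ω → ℝ)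
    (X Xh : ℕ → Ω → Fin d → ℝ) (Zh : ℤ → Ω → ℝ) (R : ℕ → Ω → ℝ) (S : ℕ → ℝ → Ω → ℝ)
    (hX0 : ∀ ω, X 0 ω = 0) (hXh0 : ∀ ω, Xh 0 ω = 0) (hZinit : ∀ ω, Zh (-1) ω = ζ₀)
    (hX : ∀ (k : ℕ) (ω : Ω),
      X (k + 1) ω = NormedSpace.exp (τ • A) *ᵥ X k ω
        + (ζ₀ / Zh ((k : ℤ) - 1) ω) • M (k + 1))
    (hR : ∀ (k : ℕ) (ω : Ω), R (k + 1) ω = C ⬝ᵥ X (k + 1) ω + N (k + 1) ω)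
    (hS : ∀ (k : ℕ) (w : ℝ) (ω : Ω),
      S (k + 1) w ω = C ⬝ᵥ (NormedSpace.exp (τ • A) *ᵥ Xh k ω)
        + (w / Zh ((k : ℤ) - 1) ω) * (C ⬝ᵥ M (k + 1)))
    (hZ : ∀ (k : ℕ) (ω : Ω),
      Zh (k : ℤ) ω =
        if |R (k + 1) ω - S (k + 1) ζ₀ ω| ≤ |R (k + 1) ω - S (k + 1) ζ₁ ω| then ζ₀ else ζ₁)
    (hXh : ∀ (k : ℕ) (ω : Ω),
      Xh (k + 1) ω = NormedSpace.exp (τ • A) *ᵥ Xh k ω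
        + (Zh (k : ℤ) ω / Zh ((k : ℤ) - 1) ω) • M (k + 1))
    (n : ℕ) (hn : 1 ≤ n) :
    ({ω : Ω | ∀ k : ℕ, 1 ≤ k → k ≤ n → Zh ((k : ℤ) - 1) ω = ζ₀}
        = ⋂ k ∈ Finset.Icc 1 n,
            {ω : Ω | |N k ω| ≤ |N k ω + ((ζ₀ - ζ₁) / ζ₀) * (C ⬝ᵥ M k)|})
      ∧ ∀ ω ∈ {ω : Ω | ∀ k : ℕ, 1 ≤ k → k ≤ n → Zh ((k : ℤ) - 1) ω = ζ₀},
          ∀ k ≤ n, Xh k ω = X k ω :=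
  one_state_correct_detection_event_general ζ₀ ζ₁ hζ A τ C M N X Xh Zh R S hX0 hXh0 hZinit hX hR hS
    hZ hXh n
end

section
/- Consider the one-state algorithm with constant nominal disturbance, as follows. Fix σ > 0, levels 0 < ζ₁ < ζ₀, an n×n real matrix A, τ ∈ ℝ, a row vector C ∈ ℝⁿ and vectors M_k ∈ ℝⁿ with C·M_k ≠ 0 (k ≥ 1), and let (N_k)_{k≥1} be an independent family of random variables on a probability space, each distributed according to the Gaussian measure with mean 0 and variance σ². Suppose the true disturbance is z_k = ζ₀ for all k, and define recursively: X₀ = X̂₀ = 0, Ẑ₋₁ = ζ₀; for k ≥ 1: X_k = exp(τA)·X_{k−1} + (ζ₀/Ẑ_{k−2})·M_k; R_k = C·X_k + N_k; S_k^w = C·exp(τA)·X̂_{k−1} + (w/Ẑ_{k−2})·C·M_k for w ∈ {ζ₀, ζ₁}; Ẑ_{k−1} = ζ₀ if |R_k − S_k^{ζ₀}| ≤ |R_k − S_k^{ζ₁}| and Ẑ_{k−1} = ζ₁ otherwise; X̂_k = exp(τA)·X̂_{k−1} + (Ẑ_{k−1}/Ẑ_{k−2})·M_k. Then for every n ≥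 1, the probability that Ẑ_{k−1} = ζ₀ for all k = 1, …, n equals ∏_{k=1}^n (1/2)·erfc( −| (ζ₀ − ζ₁)/(2ζ₀) · C·M_k | / (σ·√2) ). (This is the probability that no false positive occurs during the first n steps of the pre-failure regime, i.e., the paper's EDP^{n}(1, 0, ζ₀, ζ₀).) -/
/-!
While all past decisions are correct, the estimate `X̂_k` coincides with the true state `X_k`, so
the residual of the nominal candidate is exactly the noise `N_k` and that of the alternative is
`N_k + δ_k` with `δ_k = (ζ₀ - ζ₁)/ζ₀ · C·M_k`. Hence the first `n` decisions are all correct iff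
`|N_k| ≤ |N_k + δ_k|` for every `k ≤ n`, i.e. iff each `N_k` lies on the correct side of the
midpoint `-δ_k/2`. Independence turns the probability of this event into a product of Gaussian
half-line probabilities, which are the `erfc` values.
-/

open Matrix MeasureTheory ProbabilityTheory

noncomputable def erfc (x : ℝ) : ℝ :=
  (2 / Real.sqrt Real.pi) * ∫ t in Set.Ioi x, Real.exp (-(t ^ 2))

open Set Real
open scoped NNReal

section Gaussian

variable {v : ℝ≥0} {σ : ℝ}

lemma gaussianPDFReal_mul_sqrt_two (hσ : 0 < σ) (hv : (v : ℝ) = σ ^ 2) (t : ℝ) :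
    gaussianPDFReal 0 v (σ * √2 * t) = (σ * √2 * √π)⁻¹ * exp (-t ^ 2) := by
  have hexp : -(σ * √2 * t - 0) ^ 2 / (2 * σ ^ 2) = -t ^ 2 := by
    rw [sub_zero, mul_pow, mul_pow, sq_sqrt zero_le_two]
    field_simp
  rw [gaussianPDFReal, hv, hexp, sqrt_mul' _ (sq_nonneg σ), sqrt_sq hσ.le,
    sqrt_mul zero_le_two]
  ring

lemma integral_gaussianPDFReal_Ioi (hσ : 0 < σ) (hv : (v : ℝ) = σ ^ 2) (a : ℝ) :
    ∫ x in Ioi a, gaussianPDFReal 0 v x = 1 / 2 * erfc (a / (σ * √2)) := by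
  have hb : 0 < σ * √2 := by positivity
  calc ∫ x in Ioi a, gaussianPDFReal 0 v x
      = ∫ x in Ioi (σ * √2 * (a / (σ * √2))), gaussianPDFReal 0 v x := by
        rw [mul_div_cancel₀ _ hb.ne']
    _ = (σ * √2) • ∫ t in Ioi (a / (σ * √2)), gaussianPDFReal 0 v (σ * √2 * t) :=
        (integral_comp_mul_left_Ioi' _ _ hb).symm
    _ = 1 / 2 * erfc (a / (σ * √2)) := by
        simp_rw [gaussianPDFReal_mul_sqrt_two hσ hv, integral_const_mul, smul_eq_mul, erfc]
        field_simp

lemma gaussianReal_Ici (hσ : 0 < σ) (hv : (v : ℝ) = σ ^ 2) (a : ℝ) :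
    gaussianReal 0 v (Ici a) = ENNReal.ofReal (1 / 2 * erfc (a / (σ * √2))) := by
  have hv₀ : v ≠ 0 := by
    rintro rfl
    exact (pow_pos hσ 2).ne' hv.symm
  rw [gaussianReal_apply_eq_integral 0 hv₀, integral_Ici_eq_integral_Ioi,
    integral_gaussianPDFReal_Ioi hσ hv]

lemma gaussianReal_zero_Iic (v : ℝ≥0) (c : ℝ) :
    gaussianReal 0 v (Iic c) = gaussianReal 0 v (Ici (-c)) := by
  conv_lhs =>
    rw [← neg_zero, ← gaussianReal_map_neg, Measure.map_apply measurable_neg measurableSet_Iic]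
  rw [neg_preimage, neg_Iic]

lemma setOf_abs_le_abs_add_of_pos {δ : ℝ} (hδ : 0 < δ) :
    {x : ℝ | |x| ≤ |x + δ|} = Ici (-(δ / 2)) := by
  ext x
  simp only [mem_ofPred_eq, mem_Ici, ← sq_le_sq]
  constructor <;> intro h <;> nlinarith

lemma setOf_abs_le_abs_add_of_neg {δ : ℝ} (hδ : δ < 0) :
    {x : ℝ | |x| ≤ |x + δ|} = Iic (-(δ / 2)) := by
  ext x
  simp only [mem_ofPred_eq, mem_Iic, ← sq_le_sq]
  constructor <;> intro h <;> nlinarith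

lemma gaussianReal_abs_le_abs_add (hσ : 0 < σ) (hv : (v : ℝ) = σ ^ 2) {δ : ℝ} (hδ : δ ≠ 0) :
    gaussianReal 0 v {x | |x| ≤ |x + δ|}
      = ENNReal.ofReal (1 / 2 * erfc (-|δ / 2| / (σ * √2))) := by
  rcases hδ.lt_or_gt with hneg | hpos
  · rw [setOf_abs_le_abs_add_of_neg hneg, gaussianReal_zero_Iic, gaussianReal_Ici hσ hv,
      abs_of_neg (by linarith : δ / 2 < 0)]
  · rw [setOf_abs_le_abs_add_of_pos hpos, gaussianReal_Ici hσ hv, abs_of_pos (half_pos hpos)]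

end Gaussian

lemma forall_Icc_iff_of_step {P Q : ℕ → Prop}
    (step : ∀ m, (∀ j, 1 ≤ j → j ≤ m → P j) → (P (m + 1) ↔ Q (m + 1))) (n : ℕ) :
    (∀ j, 1 ≤ j → j ≤ n → P j) ↔ (∀ j, 1 ≤ j → j ≤ n → Q j) := by
  have split : ∀ {T : ℕ → Prop} {m : ℕ},
      (∀ j, 1 ≤ j → j ≤ m + 1 → T j) ↔ (∀ j, 1 ≤ j → j ≤ m → T j) ∧ T (m + 1) :=
    ⟨fun h => ⟨fun j h1 h2 => h j h1 (by omega), h _ (by omega) le_rfl⟩,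
      fun h j h1 h2 => (Nat.le_succ_iff.mp h2).elim (h.1 j h1) (fun e => e ▸ h.2)⟩
  induction n with
  | zero => exact ⟨fun _ j h1 h2 => by omega, fun _ j h1 h2 => by omega⟩
  | succ n ih =>
    rw [split, split]
    exact ⟨fun ⟨hP, hP1⟩ => ⟨ih.1 hP, (step n hP).1 hP1⟩,
      fun ⟨hQ, hQ1⟩ => ⟨ih.2 hQ, (step n (ih.2 hQ)).2 hQ1⟩⟩

section OneStateAlgorithm

variable {Ω : Type*} {d : ℕ} {ζ₀ ζ₁ : ℝ} {A : Matrix (Fin d) (Fin d) ℝ} {τ : ℝ} {C : Fin d → ℝ}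
  {M : ℕ → Fin d → ℝ} {N R : ℕ → Ω → ℝ} {X Xh : ℕ → Ω → Fin d → ℝ} {Zh : ℤ → Ω → ℝ}
  {S : ℕ → ℝ → Ω → ℝ}

lemma estimate_eq_state_of_decisions_eq (hX0 : ∀ ω, X 0 ω = 0) (hXh0 : ∀ ω, Xh 0 ω = 0)
    (hX : ∀ (k : ℕ) (ω : Ω),
      X (k + 1) ω = NormedSpace.exp (τ • A) *ᵥ X k ω + (ζ₀ / Zh ((k : ℤ) - 1) ω) • M (k + 1))
    (hXh : ∀ (k : ℕ) (ω : Ω),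
      Xh (k + 1) ω = NormedSpace.exp (τ • A) *ᵥ Xh k ω
        + (Zh (k : ℤ) ω / Zh ((k : ℤ) - 1) ω) • M (k + 1))
    {ω : Ω} {m : ℕ} (h : ∀ k : ℕ, 1 ≤ k → k ≤ m → Zh ((k : ℤ) - 1) ω = ζ₀) :
    Xh m ω = X m ω := by
  induction m with
  | zero => rw [hXh0, hX0]
  | succ m ih =>
    have hm : Zh (m : ℤ) ω = ζ₀ := by simpa using h (m + 1) (by omega) le_rfl
    rw [hXh, hX, ih fun k h1 h2 => h k h1 (by omega), hm]

lemma innovation_eq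
    (hX : ∀ (k : ℕ) (ω : Ω),
      X (k + 1) ω = NormedSpace.exp (τ • A) *ᵥ X k ω + (ζ₀ / Zh ((k : ℤ) - 1) ω) • M (k + 1))
    (hR : ∀ (k : ℕ) (ω : Ω), R (k + 1) ω = C ⬝ᵥ X (k + 1) ω + N (k + 1) ω)
    (hS : ∀ (k : ℕ) (w : ℝ) (ω : Ω),
      S (k + 1) w ω = C ⬝ᵥ (NormedSpace.exp (τ • A) *ᵥ Xh k ω)
        + (w / Zh ((k : ℤ) - 1) ω) * (C ⬝ᵥ M (k + 1)))
    {ω : Ω} {m : ℕ} (hXm : Xh m ω = X m ω) (w : ℝ) :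
    R (m + 1) ω - S (m + 1) w ω
      = N (m + 1) ω + (ζ₀ - w) / Zh ((m : ℤ) - 1) ω * (C ⬝ᵥ M (m + 1)) := by
  rw [hR, hS, hX, hXm, dotProduct_add, dotProduct_smul, smul_eq_mul]
  ring

lemma decision_eq_iff
    (hX : ∀ (k : ℕ) (ω : Ω),
      X (k + 1) ω = NormedSpace.exp (τ • A) *ᵥ X k ω + (ζ₀ / Zh ((k : ℤ) - 1) ω) • M (k + 1))
    (hR : ∀ (k : ℕ) (ω : Ω), R (k + 1) ω = C ⬝ᵥ X (k + 1) ω + N (k + 1) ω)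
    (hS : ∀ (k : ℕ) (w : ℝ) (ω : Ω),
      S (k + 1) w ω = C ⬝ᵥ (NormedSpace.exp (τ • A) *ᵥ Xh k ω)
        + (w / Zh ((k : ℤ) - 1) ω) * (C ⬝ᵥ M (k + 1)))
    (hZ : ∀ (k : ℕ) (ω : Ω),
      Zh (k : ℤ) ω =
        if |R (k + 1) ω - S (k + 1) ζ₀ ω| ≤ |R (k + 1) ω - S (k + 1) ζ₁ ω| then ζ₀ else ζ₁)
    (hζ : ζ₁ ≠ ζ₀) {ω : Ω} {m : ℕ} (hXm : Xh m ω = X m ω) :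
    Zh (m : ℤ) ω = ζ₀ ↔
      |N (m + 1) ω| ≤ |N (m + 1) ω + (ζ₀ - ζ₁) / Zh ((m : ℤ) - 1) ω * (C ⬝ᵥ M (m + 1))| := by
  rw [hZ, innovation_eq hX hR hS hXm, innovation_eq hX hR hS hXm, sub_self, zero_div, zero_mul,
    add_zero, ite_eq_left_iff, not_imp_comm]
  exact ⟨fun h => h hζ, fun h _ => h⟩

end OneStateAlgorithm

theorem one_state_no_false_positive_prob_general
    {Ω : Type*} [MeasurableSpace Ω] (P : Measure Ω)
    {d : ℕ}
    (σ : ℝ) (hσ : 0 < σ) (ζ₀ ζ₁ : ℝ) (hζ₁ : 0 < ζ₁) (hζ : ζ₁ < ζ₀)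
    (A : Matrix (Fin d) (Fin d) ℝ) (τ : ℝ) (C : Fin d → ℝ) (M : ℕ → Fin d → ℝ)
    (hM : ∀ k : ℕ, 1 ≤ k → C ⬝ᵥ M k ≠ 0)
    (N : ℕ → Ω → ℝ)
    (hmeas : ∀ k, Measurable (N k))
    (hindep : iIndepFun N P)
    (hdist : ∀ k, P.map (N k) = gaussianReal 0 ⟨σ ^ 2, sq_nonneg σ⟩)
    (X Xh : ℕ → Ω → Fin d → ℝ) (Zh : ℤ → Ω → ℝ) (R : ℕ → Ω → ℝ) (S : ℕ → ℝ → Ω → ℝ)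
    (hX0 : ∀ ω, X 0 ω = 0) (hXh0 : ∀ ω, Xh 0 ω = 0) (hZinit : ∀ ω, Zh (-1) ω = ζ₀)
    (hX : ∀ (k : ℕ) (ω : Ω),
      X (k + 1) ω = NormedSpace.exp (τ • A) *ᵥ X k ω
        + (ζ₀ / Zh ((k : ℤ) - 1) ω) • M (k + 1))
    (hR : ∀ (k : ℕ) (ω : Ω), R (k + 1) ω = C ⬝ᵥ X (k + 1) ω + N (k + 1) ω)
    (hS : ∀ (k : ℕ) (w : ℝ) (ω : Ω),
      S (k + 1) w ω = C ⬝ᵥ (NormedSpace.exp (τ • A) *ᵥ Xh k ω)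
        + (w / Zh ((k : ℤ) - 1) ω) * (C ⬝ᵥ M (k + 1)))
    (hZ : ∀ (k : ℕ) (ω : Ω),
      Zh (k : ℤ) ω =
        if |R (k + 1) ω - S (k + 1) ζ₀ ω| ≤ |R (k + 1) ω - S (k + 1) ζ₁ ω| then ζ₀ else ζ₁)
    (hXh : ∀ (k : ℕ) (ω : Ω),
      Xh (k + 1) ω = NormedSpace.exp (τ • A) *ᵥ Xh k ω
        + (Zh (k : ℤ) ω / Zh ((k : ℤ) - 1) ω) • M (k + 1))
    (n : ℕ) :
    P {ω : Ω | ∀ k : ℕ, 1 ≤ k → k ≤ n → Zh ((k : ℤ) - 1) ω = ζ₀}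
      = ∏ k ∈ Finset.Icc 1 n,
          ENNReal.ofReal ((1 / 2) *
            erfc (-|((ζ₀ - ζ₁) / (2 * ζ₀)) * (C ⬝ᵥ M k)| / (σ * Real.sqrt 2))) := by
  have hζ₀ : ζ₀ ≠ 0 := (hζ₁.trans hζ).ne'
  have hevent : {ω : Ω | ∀ k : ℕ, 1 ≤ k → k ≤ n → Zh ((k : ℤ) - 1) ω = ζ₀}
      = ⋂ k ∈ Finset.Icc 1 n, N k ⁻¹' {x | |x| ≤ |x + (ζ₀ - ζ₁) / ζ₀ * (C ⬝ᵥ M k)|} := by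
    ext ω
    simp only [mem_ofPred_eq, mem_iInter₂, Finset.mem_Icc, mem_preimage, and_imp]
    refine forall_Icc_iff_of_step (fun m hm => ?_) n
    have hprev : Zh ((m : ℤ) - 1) ω = ζ₀ := by
      rcases m with _ | m
      · exact hZinit ω
      · exact hm (m + 1) (by omega) le_rfl
    have hXm := estimate_eq_state_of_decisions_eq hX0 hXh0 hX hXh hm
    rw [Nat.cast_succ, add_sub_cancel_right, decision_eq_iff hX hR hS hZ hζ.ne hXm, hprev]
  have hB (c : ℝ) : MeasurableSet {x : ℝ | |x| ≤ |x + c|} :=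
    measurableSet_le measurable_abs (measurable_add_const c).abs
  rw [hevent, hindep.meas_biInter fun k _ => ⟨_, hB _, rfl⟩]
  refine Finset.prod_congr rfl fun k hk => ?_
  rw [← Measure.map_apply (hmeas k) (hB _), hdist k]
  refine (gaussianReal_abs_le_abs_add hσ rfl ?_).trans ?_
  · exact mul_ne_zero (div_ne_zero (sub_ne_zero.2 hζ.ne') hζ₀) (hM k (Finset.mem_Icc.1 hk).1)
  · congr 4
    ring_nf

/-- **Probability of no false positives in the pre-failure regime (the paper's
`EDP^n(1, 0, ζ₀, ζ₀)`).** With constant nominal disturbance `z_k = ζ₀` and independent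
Gaussian lecture noises of variance `σ²`, the probability that the one-state algorithm
decides `Ẑ_{k-1} = ζ₀` for all `k = 1, …, n` equals
`∏_{k=1}^n (1/2) erfc (-|(ζ₀-ζ₁)/(2ζ₀) · C·M_k| / (σ √2))`. -/
theorem one_state_no_false_positive_prob
    {Ω : Type*} [MeasurableSpace Ω] (P : Measure Ω) [IsProbabilityMeasure P]
    {d : ℕ}
    (σ : ℝ) (hσ : 0 < σ) (ζ₀ ζ₁ : ℝ) (hζ₁ : 0 < ζ₁) (hζ : ζ₁ < ζ₀)
    (A : Matrix (Fin d) (Fin d) ℝ) (τ : ℝ) (C : Fin d → ℝ) (M : ℕ → Fin d → ℝ)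
    (hM : ∀ k : ℕ, 1 ≤ k → C ⬝ᵥ M k ≠ 0)
    (N : ℕ → Ω → ℝ)
    (hmeas : ∀ k, Measurable (N k))
    (hindep : iIndepFun N P)
    (hdist : ∀ k, P.map (N k) = gaussianReal 0 ⟨σ ^ 2, sq_nonneg σ⟩)
    (X Xh : ℕ → Ω → Fin d → ℝ) (Zh : ℤ → Ω → ℝ) (R : ℕ → Ω → ℝ) (S : ℕ → ℝ → Ω → ℝ)
    (hX0 : ∀ ω, X 0 ω = 0) (hXh0 : ∀ ω, Xh 0 ω = 0) (hZinit : ∀ ω, Zh (-1) ω = ζ₀)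
    (hX : ∀ (k : ℕ) (ω : Ω),
      X (k + 1) ω = NormedSpace.exp (τ • A) *ᵥ X k ω
        + (ζ₀ / Zh ((k : ℤ) - 1) ω) • M (k + 1))
    (hR : ∀ (k : ℕ) (ω : Ω), R (k + 1) ω = C ⬝ᵥ X (k + 1) ω + N (k + 1) ω)
    (hS : ∀ (k : ℕ) (w : ℝ) (ω : Ω),
      S (k + 1) w ω = C ⬝ᵥ (NormedSpace.exp (τ • A) *ᵥ Xh k ω)
        + (w / Zh ((k : ℤ) - 1) ω) * (C ⬝ᵥ M (k + 1)))
    (hZ : ∀ (k : ℕ) (ω : Ω),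
      Zh (k : ℤ) ω =
        if |R (k + 1) ω - S (k + 1) ζ₀ ω| ≤ |R (k + 1) ω - S (k + 1) ζ₁ ω| then ζ₀ else ζ₁)
    (hXh : ∀ (k : ℕ) (ω : Ω),
      Xh (k + 1) ω = NormedSpace.exp (τ • A) *ᵥ Xh k ω
        + (Zh (k : ℤ) ω / Zh ((k : ℤ) - 1) ω) • M (k + 1))
    (n : ℕ) (hn : 1 ≤ n) :
    P {ω : Ω | ∀ k : ℕ, 1 ≤ k → k ≤ n → Zh ((k : ℤ) - 1) ω = ζ₀}
      = ∏ k ∈ Finset.Icc 1 n,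
          ENNReal.ofReal ((1 / 2) *
            erfc (-|((ζ₀ - ζ₁) / (2 * ζ₀)) * (C ⬝ᵥ M k)| / (σ * Real.sqrt 2))) :=
  one_state_no_false_positive_prob_general P σ hσ ζ₀ ζ₁ hζ₁ hζ A τ C M hM N hmeas hindep hdist X Xh
    Zh R S hX0 hXh0 hZinit hX hR hS hZ hXh n
end
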